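/- In the Tits cone of a Coxeter system (W,S), the stabilizer of any point x in the closed fundamental chamber C̄₀ is the parabolic subgroup W_{Γ(x)} generated by the simple reflections fixing x, i.e. Γ(x) = {s ∈ S : s·x = x}. -/

import Mathlib

/-- The coefficients `k(s,t) = -cos(π / m(s,t))` of the bilinear form associated to a Coxeter
matrix, with the convention `k(s,t) = -1` when `m(s,t) = ∞` (encoded by `M s t = 0`). -/
noncomputable def coxCoeff {B : Type*} (M : CoxeterMatrix B) (s t : B) : ℝ :=
  if M s t = 0 then -1 else -Real.cos (Real.pi / (M s t))

/-- The canonical symmetric bilinear form of a Coxeter matrix on `ℝ^S`, with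
`B(α_s, α_t) = -cos(π / m(s,t))` on the standard basis vectors `α_s`. -/
noncomputable def coxForm {B : Type*} [Fintype B] (M : CoxeterMatrix B) (x y : B → ℝ) : ℝ :=
  ∑ s, ∑ t, x s * y t * coxCoeff M s t

/-- The simple root `α_s`, a standard basis vector of `ℝ^S`. -/
noncomputable def simpleRoot {B : Type*} [DecidableEq B] (s : B) : B → ℝ := Pi.single s 1

/-- The open fundamental chamber `C₀ = {x : B(x, α_s) > 0 for all s}` of the Tits
representation. -/
noncomputable def fundamentalChamber {B : Type*} [Fintype B] [DecidableEq B]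
    (M : CoxeterMatrix B) : Set (B → ℝ) :=
  {x | ∀ s, 0 < coxForm M x (simpleRoot s)}

/-- The Tits cone `U = ⋃_{w ∈ W} w · C̄₀` associated to a representation `ρ` of `W` on `ℝ^S`. -/
noncomputable def titsCone {B W : Type*} [Fintype B] [DecidableEq B] [Group W]
    (M : CoxeterMatrix B) (ρ : W →* ((B → ℝ) ≃ₗ[ℝ] (B → ℝ))) : Set (B → ℝ) :=
  ⋃ w : W, (ρ w) '' (closure (fundamentalChamber M))

/-- The assertion that `ρ` is the Tits (geometric) representation of the Coxeter system `cs`: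
each simple reflection `s` acts by `x ↦ x - 2 B(x, α_s) α_s`. -/
def IsTitsRepresentation {B W : Type*} [Fintype B] [DecidableEq B] [Group W]
    (M : CoxeterMatrix B) (cs : CoxeterSystem M W)
    (ρ : W →* ((B → ℝ) ≃ₗ[ℝ] (B → ℝ))) : Prop :=
  ∀ (s : B) (x : B → ℝ),
    ρ (cs.simple s) x = x - (2 * coxForm M x (simpleRoot s)) • simpleRoot s

/-! The form `coxForm` is invariant under the Tits representation. The heart of the proof is
positivity of roots (Humphreys, §5.4): if `ℓ(w s) > ℓ(w)` then `w α_s ≥ 0` coordinatewise.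
By induction on `ℓ(w)`, take a right descent `t ≠ s` of `w` and factor `w = u v` with `v` an
alternating word in `s, t`, lengths adding up and `ℓ(u)` minimal. Then neither `s` nor `t` is a
right descent of `u`; since `s` is not one of `w`, the word `v` ends in `t` and is shorter than
`m(s,t)`. A rank-two computation writes `v α_s` as a nonnegative combination of `α_s` and `α_t`,
and induction applies to `u`.

Hence `w α_s ≤ 0` when `ℓ(w s) < ℓ(w)`. If such a `w` fixes `x ∈ C̄₀`, then
`0 ≤ B(x, α_s) = B(x, w α_s) ≤ 0`, so `s` fixes `x` and so does the shorter `w s`. -/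

section CoxForm

variable {B : Type*} (M : CoxeterMatrix B)

theorem coxCoeff_self (i : B) : coxCoeff M i i = 1 := by
  simp [coxCoeff]

theorem coxCoeff_comm (i j : B) : coxCoeff M i j = coxCoeff M j i := by
  simp only [coxCoeff, M.symmetric]

variable [Fintype B]

theorem coxForm_comm (x y : B → ℝ) : coxForm M x y = coxForm M y x := by
  unfold coxForm
  rw [Finset.sum_comm]
  simp only [coxCoeff_comm M _ _, mul_comm (x _)]

theorem coxForm_add_left (x y z : B → ℝ) :
    coxForm M (x + y) z = coxForm M x z + coxForm M y z := by
  simp only [coxForm, Pi.add_apply, add_mul, Finset.sum_add_distrib]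

theorem coxForm_sub_left (x y z : B → ℝ) :
    coxForm M (x - y) z = coxForm M x z - coxForm M y z := by
  simp only [coxForm, Pi.sub_apply, sub_mul, Finset.sum_sub_distrib]

theorem coxForm_smul_left (c : ℝ) (x z : B → ℝ) :
    coxForm M (c • x) z = c * coxForm M x z := by
  simp only [coxForm, Pi.smul_apply, smul_eq_mul, Finset.mul_sum, mul_assoc]

theorem coxForm_sub_right (x y z : B → ℝ) :
    coxForm M x (y - z) = coxForm M x y - coxForm M x z := by
  rw [coxForm_comm, coxForm_sub_left, coxForm_comm M y, coxForm_comm M z]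

theorem coxForm_smul_right (c : ℝ) (x z : B → ℝ) :
    coxForm M x (c • z) = c * coxForm M x z := by
  rw [coxForm_comm, coxForm_smul_left, coxForm_comm M z]

theorem continuous_coxForm_left (y : B → ℝ) : Continuous fun x => coxForm M x y := by
  unfold coxForm
  fun_prop

variable [DecidableEq B]

theorem coxForm_simpleRoot_simpleRoot (i j : B) :
    coxForm M (simpleRoot i) (simpleRoot j) = coxCoeff M i j := by
  simp [coxForm, simpleRoot, Pi.single_apply]

theorem coxForm_simpleRoot_self (i : B) : coxForm M (simpleRoot i) (simpleRoot i) = 1 := by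
  rw [coxForm_simpleRoot_simpleRoot, coxCoeff_self]

theorem coxForm_eq_sum_simpleRoot (x y : B → ℝ) :
    coxForm M x y = ∑ t, y t * coxForm M x (simpleRoot t) := by
  simp only [coxForm, simpleRoot, Pi.single_apply, mul_ite, mul_one, mul_zero, ite_mul, zero_mul,
    Finset.sum_ite_eq', Finset.mem_univ, if_true, Finset.mul_sum]
  rw [Finset.sum_comm]
  exact Finset.sum_congr rfl fun _ _ => Finset.sum_congr rfl fun _ _ => by ring

end CoxForm

open Polynomial.Chebyshev in
/-- `U_n(cos (π / m(i,j))) = sin ((n + 1) π / m(i,j)) / sin (π / m(i,j))`, or `n + 1` when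
`m(i,j) = ∞`: the coordinates of `w α_i` for `w` in the dihedral subgroup `⟨s_i, s_j⟩`. -/
noncomputable def rankTwoCoeff {B : Type*} (M : CoxeterMatrix B) (i j : B) (n : ℤ) : ℝ :=
  (U ℝ n).eval (-coxCoeff M i j)

section RankTwo

open Polynomial.Chebyshev

variable {B : Type*} (M : CoxeterMatrix B) {i j : B}

theorem rankTwoCoeff_add_one (n : ℤ) :
    rankTwoCoeff M i j (n + 1) =
      2 * -coxCoeff M i j * rankTwoCoeff M i j n - rankTwoCoeff M i j (n - 1) := by
  simp [rankTwoCoeff, U_add_one]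

theorem rankTwoCoeff_nonneg (hij : i ≠ j) {n : ℤ} (hn : -1 ≤ n)
    (hm : M i j = 0 ∨ n < M i j) : 0 ≤ rankTwoCoeff M i j n := by
  have hn' : (0 : ℝ) ≤ n + 1 := by exact_mod_cast (show (0 : ℤ) ≤ n + 1 by omega)
  unfold rankTwoCoeff coxCoeff
  by_cases h0 : M i j = 0
  · simpa only [h0, if_true, neg_neg, U_eval_one] using hn'
  have hnm : (n : ℝ) + 1 ≤ M i j := by exact_mod_cast hm.resolve_left h0
  have hM : (2 : ℝ) ≤ M i j := by
    have := M.off_diagonal i j hij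
    exact_mod_cast (show 2 ≤ M i j by omega)
  have hθ : Real.pi / M i j ≤ Real.pi / 2 := by gcongr
  have hsinθ : 0 < Real.sin (Real.pi / M i j) :=
    Real.sin_pos_of_pos_of_lt_pi (by positivity) (by linarith [Real.pi_pos])
  have hsin : 0 ≤ Real.sin ((n + 1) * (Real.pi / M i j)) := by
    apply Real.sin_nonneg_of_nonneg_of_le_pi (by positivity)
    calc ((n : ℝ) + 1) * (Real.pi / M i j) ≤ M i j * (Real.pi / M i j) := by gcongr
      _ = Real.pi := by field_simp
  simp only [h0, if_false, neg_neg]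
  exact nonneg_of_mul_nonneg_left ((U_real_cos _ n).symm ▸ hsin) hsinθ

end RankTwo

namespace CoxeterSystem

variable {B W : Type*} [Group W] {M : CoxeterMatrix B} (cs : CoxeterSystem M W)

def IsAlternatingProd (i j : B) (k : ℕ) (x : W) : Prop :=
  x = cs.wordProd (alternatingWord i j k) ∨ x = cs.wordProd (alternatingWord j i k)

variable {cs}

theorem IsAlternatingProd.length_le {i j : B} {k : ℕ} {x : W}
    (hx : cs.IsAlternatingProd i j k x) : cs.length x ≤ k := by
  rcases hx with rfl | rfl <;> simpa using cs.length_wordProd_le (alternatingWord _ _ k)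

theorem simple_mul_wordProd_alternatingWord {i j c : B} (hc : c = i ∨ c = j) (k : ℕ) :
    ∃ k' ≤ k + 1, cs.IsAlternatingProd i j k'
      (cs.simple c * cs.wordProd (alternatingWord i j k)) := by
  by_cases hnext : c = if Even k then j else i
  · exact ⟨k + 1, le_rfl, Or.inl (by rw [alternatingWord_succ', cs.wordProd_cons, hnext])⟩
  cases k with
  | zero =>
    obtain rfl : c = i := hc.resolve_right (by simpa using hnext)
    exact ⟨1, by omega, Or.inr (by simp [alternatingWord])⟩
  | succ k =>
    have hcur : c = if Even k then j else i := by
      by_cases hk : Even k <;> simp_all [Nat.even_add_one]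
    refine ⟨k, by omega, Or.inl ?_⟩
    rw [alternatingWord_succ', cs.wordProd_cons, ← hcur, simple_mul_simple_cancel_left]

theorem IsAlternatingProd.simple_mul {i j c : B} {k : ℕ} {x : W}
    (hx : cs.IsAlternatingProd i j k x) (hc : c = i ∨ c = j) :
    ∃ k' ≤ k + 1, cs.IsAlternatingProd i j k' (cs.simple c * x) := by
  rcases hx with rfl | rfl
  · exact simple_mul_wordProd_alternatingWord hc k
  · obtain ⟨k', hk', h⟩ := simple_mul_wordProd_alternatingWord (cs := cs) hc.symm k
    exact ⟨k', hk', Or.symm h⟩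

theorem exists_factorization_not_isRightDescent (w : W) (i j : B) :
    ∃ u x k, w = u * x ∧ cs.IsAlternatingProd i j k x ∧ cs.length u + k = cs.length w ∧
      ¬cs.IsRightDescent u i ∧ ¬cs.IsRightDescent u j := by
  suffices key : ∀ n u x k, cs.length u = n → w = u * x → cs.IsAlternatingProd i j k x →
      cs.length u + k = cs.length w → ∃ u x k, w = u * x ∧ cs.IsAlternatingProd i j k x ∧
        cs.length u + k = cs.length w ∧ ¬cs.IsRightDescent u i ∧ ¬cs.IsRightDescent u j from
    key _ w 1 0 rfl (mul_one w).symm (Or.inl rfl) rfl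
  intro n
  induction n using Nat.strong_induction_on with
  | _ n ih =>
  intro u x k hn hw hx hlen
  by_cases hdesc : ∃ c, (c = i ∨ c = j) ∧ cs.IsRightDescent u c
  · obtain ⟨c, hc, hu⟩ := hdesc
    obtain ⟨k', hk', hx'⟩ := hx.simple_mul hc
    have hu' := cs.isRightDescent_iff.mp hu
    have hw' : w = u * cs.simple c * (cs.simple c * x) := by
      rw [hw, mul_assoc, simple_mul_simple_cancel_left]
    have hle : cs.length w ≤ cs.length (u * cs.simple c) + k' :=
      hw' ▸ (cs.length_mul_le _ _).trans (Nat.add_le_add_left hx'.length_le _)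
    exact ih _ (by omega) _ _ k' rfl hw' hx' (by omega)
  · push Not at hdesc
    exact ⟨u, x, k, hw, hx, hlen, hdesc i (Or.inl rfl), hdesc j (Or.inr rfl)⟩

theorem isRightDescent_of_eq_mul_alternatingWord {w u : W} {i j : B} {k : ℕ}
    (hw : w = u * cs.wordProd (alternatingWord j i (k + 1)))
    (hlen : cs.length u + (k + 1) = cs.length w) : cs.IsRightDescent w i := by
  have hwi : w * cs.simple i = u * cs.wordProd (alternatingWord i j k) := by
    rw [hw, alternatingWord_succ, wordProd_concat, ← mul_assoc, simple_mul_simple_cancel_right]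
  have := (cs.length_mul_le u _).trans
    (Nat.add_le_add_left (cs.length_wordProd_le (alternatingWord i j k)) _)
  rw [IsRightDescent, hwi]
  simp only [length_alternatingWord] at this
  omega

theorem IsAlternatingProd.eq_of_not_isRightDescent {w u x : W} {i j : B} {k : ℕ}
    (hx : cs.IsAlternatingProd i j k x) (hw : w = u * x) (hlen : cs.length u + k = cs.length w)
    (hi : ¬cs.IsRightDescent w i) :
    x = cs.wordProd (alternatingWord i j k) ∧ (M i j = 0 ∨ k < M i j) := by
  have hx' : x = cs.wordProd (alternatingWord i j k) := by
    rcases hx with hx | hx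
    · exact hx
    cases k with
    | zero => simpa [alternatingWord] using hx
    | succ k => exact (hi (isRightDescent_of_eq_mul_alternatingWord (hx ▸ hw) hlen)).elim
  refine ⟨hx', ?_⟩
  by_contra! hbound
  obtain ⟨hm, hmk⟩ := hbound
  rcases hmk.eq_or_lt with rfl | hlt
  · have braid : cs.wordProd (alternatingWord i j (M i j)) =
        cs.wordProd (alternatingWord j i (M i j)) := by
      simpa [braidWord, M.symmetric j i] using cs.wordProd_braidWord_eq i j
    obtain ⟨m, hm'⟩ := Nat.exists_eq_succ_of_ne_zero hm
    rw [hm'] at hlen braid hx'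
    rw [hx', braid] at hw
    exact hi (isRightDescent_of_eq_mul_alternatingWord hw hlen)
  · have hred := cs.not_isReduced_alternatingWord i j hm hlt
    have hle : cs.length w ≤ cs.length u + cs.length x := hw ▸ cs.length_mul_le u x
    have hxk := hx.length_le
    rw [IsReduced, length_alternatingWord, ← hx'] at hred
    omega

end CoxeterSystem

section Chamber

variable {B : Type*} [Fintype B] [DecidableEq B] {M : CoxeterMatrix B}

theorem coxForm_simpleRoot_nonneg_of_mem_closure {x : B → ℝ}
    (hx : x ∈ closure (fundamentalChamber M)) (t : B) : 0 ≤ coxForm M x (simpleRoot t) :=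
  closure_minimal (fun _ hy => (hy t).le)
    (isClosed_le continuous_const (continuous_coxForm_left M _)) hx

theorem coxForm_nonpos_of_mem_closure {x v : B → ℝ} (hx : x ∈ closure (fundamentalChamber M))
    (hv : v ≤ 0) : coxForm M x v ≤ 0 := by
  rw [coxForm_eq_sum_simpleRoot]
  exact Finset.sum_nonpos fun t _ =>
    mul_nonpos_of_nonpos_of_nonneg (hv t) (coxForm_simpleRoot_nonneg_of_mem_closure hx t)

end Chamber

namespace IsTitsRepresentation

open CoxeterSystem

variable {B W : Type*} [Fintype B] [DecidableEq B] [Group W] {M : CoxeterMatrix B}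
  {cs : CoxeterSystem M W} {ρ : W →* ((B → ℝ) ≃ₗ[ℝ] (B → ℝ))}

theorem apply_simpleRoot_self (hρ : IsTitsRepresentation M cs ρ) (i : B) :
    ρ (cs.simple i) (simpleRoot i) = -simpleRoot i := by
  rw [hρ, coxForm_simpleRoot_self]
  module

theorem coxForm_simple_apply_apply (hρ : IsTitsRepresentation M cs ρ) (i : B) (x y : B → ℝ) :
    coxForm M (ρ (cs.simple i) x) (ρ (cs.simple i) y) = coxForm M x y := by
  simp only [hρ i, coxForm_sub_left, coxForm_sub_right, coxForm_smul_left, coxForm_smul_right,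
    coxForm_simpleRoot_self, coxForm_comm M (simpleRoot i) y]
  ring

theorem coxForm_apply_apply (hρ : IsTitsRepresentation M cs ρ) (w : W) (x y : B → ℝ) :
    coxForm M (ρ w x) (ρ w y) = coxForm M x y := by
  induction w using cs.simple_induction_left generalizing x y with
  | one => simp
  | mul_simple_left w i ih =>
    simp only [map_mul, LinearEquiv.mul_apply, hρ.coxForm_simple_apply_apply, ih]

theorem apply_alternatingWord_simpleRoot (hρ : IsTitsRepresentation M cs ρ) (i j : B) (k : ℕ) :
    ρ (cs.wordProd (alternatingWord i j k)) (simpleRoot i) =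
      if Even k then
        rankTwoCoeff M i j k • simpleRoot i + rankTwoCoeff M i j (k - 1) • simpleRoot j
      else
        rankTwoCoeff M i j (k - 1) • simpleRoot i + rankTwoCoeff M i j k • simpleRoot j := by
  induction k with
  | zero => simp [alternatingWord, rankTwoCoeff]
  | succ k ih =>
    rw [alternatingWord_succ', cs.wordProd_cons, map_mul, LinearEquiv.mul_apply, ih]
    have hrec := rankTwoCoeff_add_one M (i := i) (j := j) k
    by_cases hk : Even k
    · simp only [hk, if_true, Nat.even_add_one, not_true, if_false, hρ j, coxForm_add_left,
        coxForm_smul_left, coxForm_simpleRoot_simpleRoot, coxCoeff_self]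
      push_cast
      rw [add_sub_cancel_right, hrec]
      module
    · simp only [hk, if_false, Nat.even_add_one, not_false_eq_true, if_true, hρ i,
        coxForm_add_left, coxForm_smul_left, coxForm_simpleRoot_simpleRoot,
        coxCoeff_self, coxCoeff_comm M j i]
      push_cast
      rw [add_sub_cancel_right, hrec]
      module

theorem exists_nonneg_apply_alternatingWord_simpleRoot (hρ : IsTitsRepresentation M cs ρ)
    {i j : B} (hij : i ≠ j) {k : ℕ} (hk : M i j = 0 ∨ k < M i j) :
    ∃ a b : ℝ, 0 ≤ a ∧ 0 ≤ b ∧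
      ρ (cs.wordProd (alternatingWord i j k)) (simpleRoot i) =
        a • simpleRoot i + b • simpleRoot j := by
  have hk' : M i j = 0 ∨ (k : ℤ) < M i j := by exact_mod_cast hk
  have hk'' : M i j = 0 ∨ (k : ℤ) - 1 < M i j := hk'.imp_right (by omega)
  have h0 := rankTwoCoeff_nonneg M hij (by omega) hk'
  have h1 := rankTwoCoeff_nonneg M hij (by omega) hk''
  rw [hρ.apply_alternatingWord_simpleRoot]
  split_ifs
  · exact ⟨_, _, h0, h1, rfl⟩
  · exact ⟨_, _, h1, h0, rfl⟩

theorem apply_simpleRoot_nonneg (hρ : IsTitsRepresentation M cs ρ) {w : W} {s : B}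
    (hs : ¬cs.IsRightDescent w s) : 0 ≤ ρ w (simpleRoot s) := by
  induction hn : cs.length w using Nat.strong_induction_on generalizing w s with
  | _ n ih =>
  rcases eq_or_ne w 1 with rfl | hw1
  · simp [simpleRoot]
  obtain ⟨t, ht⟩ := cs.exists_rightDescent_of_ne_one hw1
  have hst : s ≠ t := by rintro rfl; exact hs ht
  obtain ⟨u, x, k, hw, hx, hlen, hus, hut⟩ := cs.exists_factorization_not_isRightDescent w s t
  have hk : k ≠ 0 := by
    rintro rfl
    obtain rfl : x = 1 := by rcases hx with rfl | rfl <;> rfl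
    rw [mul_one] at hw
    exact hut (hw ▸ ht)
  obtain ⟨rfl, hbound⟩ := hx.eq_of_not_isRightDescent hw hlen hs
  obtain ⟨a, b, ha, hb, hab⟩ := hρ.exists_nonneg_apply_alternatingWord_simpleRoot hst hbound
  rw [hw, map_mul, LinearEquiv.mul_apply, hab, map_add, map_smul, map_smul]
  exact add_nonneg (smul_nonneg ha (ih _ (by omega) hus rfl))
    (smul_nonneg hb (ih _ (by omega) hut rfl))

theorem apply_simpleRoot_nonpos (hρ : IsTitsRepresentation M cs ρ) {w : W} {s : B}
    (hs : cs.IsRightDescent w s) : ρ w (simpleRoot s) ≤ 0 := by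
  have h := hρ.apply_simpleRoot_nonneg (cs.isRightDescent_iff_not_isRightDescent_mul.mp hs)
  rwa [map_mul, LinearEquiv.mul_apply, hρ.apply_simpleRoot_self, map_neg, neg_nonneg] at h

theorem apply_simple_eq_of_isRightDescent (hρ : IsTitsRepresentation M cs ρ) {x : B → ℝ}
    (hx : x ∈ closure (fundamentalChamber M)) {w : W} (hwx : ρ w x = x) {s : B}
    (hs : cs.IsRightDescent w s) : ρ (cs.simple s) x = x := by
  have hle : coxForm M x (simpleRoot s) ≤ 0 := by
    rw [← hρ.coxForm_apply_apply w, hwx]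
    exact coxForm_nonpos_of_mem_closure hx (hρ.apply_simpleRoot_nonpos hs)
  have hzero := le_antisymm hle (coxForm_simpleRoot_nonneg_of_mem_closure hx s)
  rw [hρ s, hzero, mul_zero, zero_smul, sub_zero]

theorem comap_stabilizer_eq_closure (hρ : IsTitsRepresentation M cs ρ) {x : B → ℝ}
    (hx : x ∈ closure (fundamentalChamber M)) :
    (MulAction.stabilizer ((B → ℝ) ≃ₗ[ℝ] (B → ℝ)) x).comap ρ =
      Subgroup.closure (cs.simple '' {s | ρ (cs.simple s) x = x}) := by
  refine le_antisymm (fun w hw => ?_) ((Subgroup.closure_le _).2 ?_)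
  · replace hw : ρ w x = x := hw
    induction hn : cs.length w using Nat.strong_induction_on generalizing w with
    | _ n ih =>
    rcases eq_or_ne w 1 with rfl | hw1
    · exact one_mem _
    obtain ⟨s, hs⟩ := cs.exists_rightDescent_of_ne_one hw1
    have hsx := hρ.apply_simple_eq_of_isRightDescent hx hw hs
    have hws : ρ (w * cs.simple s) x = x := by rw [map_mul, LinearEquiv.mul_apply, hsx, hw]
    rw [← cs.simple_mul_simple_cancel_right (w := w) s]
    exact mul_mem (ih _ (hn ▸ hs) _ hws rfl) (Subgroup.subset_closure ⟨s, hsx, rfl⟩)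
  · rintro _ ⟨s, hs, rfl⟩
    exact hs

end IsTitsRepresentation

/-- In the Tits cone of a Coxeter system `(W, S)`, the stabilizer of any point `x` of the
closed fundamental chamber `C̄₀` is the parabolic subgroup generated by the simple reflections
fixing `x`: for `w ∈ W`, one has `w · x = x` iff `w ∈ ⟨s ∈ S : s · x = x⟩`. -/
theorem stabilizer_of_chamber_point {B W : Type*} [Fintype B] [DecidableEq B] [Group W]
    (M : CoxeterMatrix B) (cs : CoxeterSystem M W)
    (ρ : W →* ((B → ℝ) ≃ₗ[ℝ] (B → ℝ))) (hρ : IsTitsRepresentation M cs ρ) :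
    ∀ x ∈ closure (fundamentalChamber M), ∀ w : W,
      ρ w x = x ↔
        w ∈ Subgroup.closure (cs.simple '' {s : B | ρ (cs.simple s) x = x}) := by
  intro x hx w
  exact SetLike.ext_iff.1 (hρ.comap_stabilizer_eq_closure hx) w
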